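/- Let g : ℝ^K → ℝ be defined by g(γ) = ‖w ⊙ γ‖₁^α for a fixed 0-1 vector w ∈ {0,1}^K and α ∈ (0,1), and define for ζ > 0 the surrogate s(γ, ζ) = (α^α/(1−α)^{α−1})·ζ^{1−1/α}·‖w ⊙ γ‖₁ + α^α (1−α)^{1−α} ζ. Then for every γ with ‖w ⊙ γ‖₁ > 0, the minimum of ζ ↦ s(γ, ζ) over ζ > 0 is attained at ζ*(γ) = ((1−α)/α)^α ‖w ⊙ γ‖₁^α, and min_{ζ>0} s(γ, ζ) = g(γ). -/

import Mathlib

/-!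
Both claims reduce to weighted AM-GM with weights `α, 1 - α`. Writing
`c = α^α (1-α)^(1-α)` (which is also `α^α / (1-α)^(α-1)`), the surrogate is
`c (a ζ^((α-1)/α) + ζ)`, and AM-GM bounds it below by
`(a ζ^((α-1)/α))^α ζ^(1-α) = a^α`. At `ζ* = ((1-α)/α)^α a^α` the two summands are
in the ratio `α : 1-α` of the AM-GM equality case, and the value is exactly `a^α`.
-/

namespace Real

theorem rpow_mul_rpow_one_sub_le {p x y : ℝ} (hp0 : 0 < p) (hp1 : p < 1)
    (hx : 0 ≤ x) (hy : 0 ≤ y) :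
    x ^ p * y ^ (1 - p) ≤ p ^ p * (1 - p) ^ (1 - p) * (x + y) := by
  have hq : 0 < 1 - p := by linarith
  have amgm := geom_mean_le_arith_mean2_weighted hp0.le hq.le
    (div_nonneg hx hp0.le) (div_nonneg hy hq.le) (add_sub_cancel p 1)
  rw [div_rpow hx hp0.le, div_rpow hy hq.le] at amgm
  rw [← div_le_iff₀' (by positivity)]
  calc x ^ p * y ^ (1 - p) / (p ^ p * (1 - p) ^ (1 - p))
      = x ^ p / p ^ p * (y ^ (1 - p) / (1 - p) ^ (1 - p)) := by ring
    _ ≤ p * (x / p) + (1 - p) * (y / (1 - p)) := amgm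
    _ = x + y := by field_simp

theorem rpow_mul_one_sub_rpow_mul_div_rpow_sub_one {p : ℝ} (hp0 : 0 < p) (hp1 : p < 1) :
    p ^ p * (1 - p) ^ (1 - p) * ((1 - p) / p) ^ (p - 1) = p := by
  have hq : 0 < 1 - p := by linarith
  have hcancel : (1 - p) ^ (1 - p) * (1 - p) ^ (p - 1) = 1 := by
    rw [← rpow_add hq, sub_add_sub_cancel', sub_self, rpow_zero]
  rw [div_rpow hq.le hp0.le, rpow_sub_one hp0.ne']
  field_simp
  exact hcancel

end Real

open Real in
theorem stmt_18_general (α : ℝ) (hα : α ∈ Set.Ioo (0:ℝ) 1) (a : ℝ) (ha : 0 < a) :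
    (α^α / (1-α)^(α-1)) * (((1-α)/α)^α * a^α)^(1 - 1/α) * a
        + α^α * (1-α)^(1-α) * (((1-α)/α)^α * a^α) = a^α ∧
    ∀ ζ : ℝ, 0 < ζ →
      a^α ≤ (α^α / (1-α)^(α-1)) * ζ^(1 - 1/α) * a + α^α * (1-α)^(1-α) * ζ := by
  obtain ⟨hα0, hα1⟩ := hα
  have hβ : 0 < 1 - α := by linarith
  have hcoef : α^α / (1-α)^(α-1) = α^α * (1-α)^(1-α) := by
    rw [div_eq_mul_inv, ← rpow_neg hβ.le, neg_sub]
  have hexp : 1 - 1/α = (α-1)/α := by field_simp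
  rw [hcoef, hexp]
  constructor
  · have ht : 0 < (1-α)/α := by positivity
    have hopt : (((1-α)/α)^α * a^α)^((α-1)/α) = ((1-α)/α)^(α-1) * a^(α-1) := by
      rw [mul_rpow (rpow_nonneg ht.le _) (rpow_nonneg ha.le _), ← rpow_mul ht.le,
        ← rpow_mul ha.le, mul_div_cancel₀ _ hα0.ne']
    have htpow : ((1-α)/α)^α = ((1-α)/α)^(α-1) * ((1-α)/α) := by
      rw [← rpow_add_one ht.ne', sub_add_cancel]
    rw [hopt, rpow_sub_one ha.ne']
    calc α^α * (1-α)^(1-α) * (((1-α)/α)^(α-1) * (a^α / a)) * a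
          + α^α * (1-α)^(1-α) * (((1-α)/α)^α * a^α)
        = α^α * (1-α)^(1-α) * ((1-α)/α)^(α-1) * (1 + (1-α)/α) * a^α := by
          rw [htpow]
          field_simp
      _ = a^α := by
          rw [rpow_mul_one_sub_rpow_mul_div_rpow_sub_one hα0 hα1]
          field_simp
          ring
  · intro ζ hζ
    have hprod : (a * ζ^((α-1)/α))^α * ζ^(1-α) = a^α := by
      rw [mul_rpow ha.le (rpow_nonneg hζ.le _), ← rpow_mul hζ.le, div_mul_cancel₀ _ hα0.ne',
        mul_assoc, ← rpow_add hζ, sub_add_sub_cancel', sub_self, rpow_zero, mul_one]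
    calc a^α = (a * ζ^((α-1)/α))^α * ζ^(1-α) := hprod.symm
      _ ≤ α^α * (1-α)^(1-α) * (a * ζ^((α-1)/α) + ζ) :=
          rpow_mul_rpow_one_sub_le hα0 hα1 (by positivity) hζ.le
      _ = α^α * (1-α)^(1-α) * ζ^((α-1)/α) * a + α^α * (1-α)^(1-α) * ζ := by ring

theorem stmt_18 (K : ℕ) (w γ : Fin K → ℝ) (hw : ∀ k, w k = 0 ∨ w k = 1)
    (α : ℝ) (hα : α ∈ Set.Ioo (0:ℝ) 1) (a : ℝ)
    (ha_def : a = ∑ k, w k * |γ k|) (ha : 0 < a) :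
    (α^α / (1-α)^(α-1)) * (((1-α)/α)^α * a^α)^(1 - 1/α) * a
        + α^α * (1-α)^(1-α) * (((1-α)/α)^α * a^α) = a^α ∧
    ∀ ζ : ℝ, 0 < ζ →
      a^α ≤ (α^α / (1-α)^(α-1)) * ζ^(1 - 1/α) * a + α^α * (1-α)^(1-α) * ζ :=
  stmt_18_general α hα a ha
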